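/- Let σ > 0, R ≥ 0, C ∈ (0,1), and let g : [0,1] → [0,1] be measurable with ∫₀¹ g(y) dy = C and ∫₀¹ Φ⁻¹(y) g(y) dy = D. Suppose a ∈ [0, 1 − C] satisfies Φ'(Φ⁻¹(a)) − Φ'(Φ⁻¹(a + C)) = D (equivalently ∫ₐ^{a+C} Φ⁻¹(y) dy = D). Then ∫₀¹ g(y) · exp((R/σ)·Φ⁻¹(y) − R²/(2σ²)) dy ≥ ∫ₐ^{a+C} exp((R/σ)·Φ⁻¹(y) − R²/(2σ²)) dy = Φ(Φ⁻¹(a + C) − R/σ) − Φ(Φ⁻¹(a) − R/σ), with equality when g is the indicator function of [a, a + C]. -/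

import Mathlib

open MeasureTheory ProbabilityTheory Real

noncomputable section

/-- The standard normal cumulative distribution function Φ. -/
def Phi (x : ℝ) : ℝ := ((gaussianReal 0 1) (Set.Iic x)).toReal

/-- The inverse Φ⁻¹ of the standard normal CDF (meaningful on (0,1)). -/
def PhiInv : ℝ → ℝ := Function.invFun Phi

/-- The standard normal probability density function Φ'. -/
def stdPdf (x : ℝ) : ℝ := Real.exp (-x ^ 2 / 2) / Real.sqrt (2 * Real.pi)

/-- `Φ(Φ⁻¹(y) - c)` with the conventions `Φ⁻¹(0) = -∞`, `Φ⁻¹(1) = +∞`,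
`Φ(-∞ - c) = 0`, `Φ(+∞ - c) = 1`. -/
def PhiShift (c y : ℝ) : ℝ := if y ≤ 0 then 0 else if 1 ≤ y then 1 else Phi (PhiInv y - c)

/-- `Φ'(Φ⁻¹(y))` with the conventions `Φ⁻¹(0) = -∞`, `Φ⁻¹(1) = +∞`, `Φ'(±∞) = 0`. -/
def pdfAtQuantile (y : ℝ) : ℝ := if y ≤ 0 then 0 else if 1 ≤ y then 0 else stdPdf (PhiInv y)

/-- The isotropic Gaussian measure `N(0, σ²I_d)` on `ℝ^d`. -/
def gaussPi (σ : ℝ) (d : ℕ) : Measure (EuclideanSpace ℝ (Fin d)) :=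
  Measure.map (MeasurableEquiv.toLp 2 (Fin d → ℝ))
    (Measure.pi fun _ : Fin d => gaussianReal 0 (Real.toNNReal (σ ^ 2)))

/-- The Gaussian-smoothed function `p_a(x) = E_{ε ~ N(0,σ²I_d)}[f(x+ε)]`. -/
def smoothed (σ : ℝ) (d : ℕ) (f : EuclideanSpace ℝ (Fin d) → ℝ)
    (x : EuclideanSpace ℝ (Fin d)) : ℝ := ∫ ε, f (x + ε) ∂(gaussPi σ d)

/-- A centered real random variable `Z` is `(a,b)`-subexponential if `E[Z] = 0` and
`E[exp (l Z)] ≤ exp (a² l² / 2)` for all `|l| ≤ 1/b`. -/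
def IsSubexponential {Ω : Type*} [MeasurableSpace Ω] (μ : Measure Ω) (Z : Ω → ℝ)
    (a b : ℝ) : Prop :=
  (∫ ω, Z ω ∂μ) = 0 ∧
    ∀ l : ℝ, |l| ≤ 1 / b → (∫ ω, Real.exp (l * Z ω) ∂μ) ≤ Real.exp (a ^ 2 * l ^ 2 / 2)

/-!
Substituting `y = Φ(x)` turns integrals over `(0, 1)` of functions of `Φ⁻¹(y)` into Gaussian
integrals; since `Φ'(x) · exp (t x - t² / 2) = Φ'(x - t)`, this gives the closed form
`Φ(Φ⁻¹(v) - t) - Φ(Φ⁻¹(u) - t)` for the integral of the weight over `(u, v)`.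

For the inequality, the two constraints say that `g` and the indicator of `J = (a, a + C)` have
the same integral against every affine function `α + β Φ⁻¹`. If `0 < a < a + C < 1`, take for
`α + β x` the secant of the convex function `φ(x) = exp (t x - t² / 2)` through `Φ⁻¹(a)` and
`Φ⁻¹(a + C)`: then `(g - 1_J) (φ ∘ Φ⁻¹ - α - β Φ⁻¹) ≥ 0`, and integrating gives the claim.
If `a = 0` or `a + C = 1`, the moment `∫ Φ⁻¹ g` is extremal among all `[0, 1]`-valued `g` of
mass `C`, which forces `g = 1_J` almost everywhere.
-/

open Set Filter Topology

lemma stdPdf_eq_gaussianPDFReal : stdPdf = gaussianPDFReal 0 1 := by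
  ext x
  simp [stdPdf, gaussianPDFReal, div_eq_inv_mul, mul_comm]

lemma stdPdf_pos (x : ℝ) : 0 < stdPdf x := by
  rw [stdPdf_eq_gaussianPDFReal]
  exact gaussianPDFReal_pos 0 1 x one_ne_zero

lemma continuous_stdPdf : Continuous stdPdf := by
  unfold stdPdf
  fun_prop

lemma integrable_stdPdf : Integrable stdPdf := by
  rw [stdPdf_eq_gaussianPDFReal]
  exact integrable_gaussianPDFReal 0 1

lemma hasDerivAt_stdPdf (x : ℝ) : HasDerivAt stdPdf (-(x * stdPdf x)) x := by
  have h : HasDerivAt (fun y : ℝ => -y ^ 2 / 2) (-x) x := by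
    simpa [neg_div] using ((hasDerivAt_pow 2 x).div_const 2).fun_neg
  exact (h.exp.div_const (√(2 * π))).congr_deriv (by rw [stdPdf]; ring)

lemma integrable_mul_stdPdf : Integrable fun x => x * stdPdf x := by
  have h := (integrable_mul_exp_neg_mul_sq (b := 1 / 2) (by norm_num)).div_const (√(2 * π))
  refine h.congr (Eventually.of_forall fun x => ?_)
  simp only [stdPdf]
  ring_nf

lemma tendsto_stdPdf_cocompact : Tendsto stdPdf (cocompact ℝ) (𝓝 0) := by
  have h := (tendsto_rpow_abs_mul_exp_neg_mul_sq_cocompact (a := 1 / 2) (by norm_num) 0).div_const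
    (√(2 * π))
  rw [zero_div] at h
  refine h.congr fun x => ?_
  simp only [stdPdf, rpow_zero, one_mul]
  ring_nf

lemma stdPdf_mul_exp (t x : ℝ) : stdPdf x * exp (t * x - t ^ 2 / 2) = stdPdf (x - t) := by
  rw [stdPdf, stdPdf, div_mul_eq_mul_div, ← exp_add]
  ring_nf

lemma Phi_eq_cdf : Phi = cdf (gaussianReal 0 1) := by
  ext x
  rw [cdf_eq_real, Phi, measureReal_def]

lemma Phi_eq_integral (x : ℝ) : Phi x = ∫ t in Iic x, stdPdf t := by
  rw [Phi, gaussianReal_apply_eq_integral 0 one_ne_zero, ENNReal.toReal_ofReal,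
    stdPdf_eq_gaussianPDFReal]
  exact setIntegral_nonneg measurableSet_Iic fun t _ => (gaussianPDFReal_pos 0 1 t one_ne_zero).le

lemma hasDerivAt_Phi (x : ℝ) : HasDerivAt Phi (stdPdf x) x := by
  have h : ∀ y, Phi 0 + ∫ t in (0 : ℝ)..y, stdPdf t = Phi y := fun y => by
    rw [Phi_eq_integral, Phi_eq_integral, ← intervalIntegral.integral_Iic_sub_Iic
      integrable_stdPdf.integrableOn integrable_stdPdf.integrableOn]
    ring
  refine ((intervalIntegral.integral_hasDerivAt_right integrable_stdPdf.intervalIntegrable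
    (continuous_stdPdf.stronglyMeasurableAtFilter _ _) continuous_stdPdf.continuousAt).const_add
    (Phi 0)).congr_of_eventuallyEq (Eventually.of_forall fun y => (h y).symm)

lemma strictMono_Phi : StrictMono Phi :=
  strictMono_of_deriv_pos fun x => (hasDerivAt_Phi x).deriv ▸ stdPdf_pos x

lemma continuous_Phi : Continuous Phi :=
  continuous_iff_continuousAt.2 fun x => (hasDerivAt_Phi x).continuousAt

lemma tendsto_Phi_atBot : Tendsto Phi atBot (𝓝 0) := Phi_eq_cdf ▸ tendsto_cdf_atBot _

lemma tendsto_Phi_atTop : Tendsto Phi atTop (𝓝 1) := Phi_eq_cdf ▸ tendsto_cdf_atTop _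

lemma range_Phi : range Phi = Ioo 0 1 := by
  refine Subset.antisymm ?_ fun y hy => ?_
  · rintro _ ⟨x, rfl⟩
    have h₀ : 0 ≤ Phi (x - 1) := Phi_eq_cdf ▸ cdf_nonneg _ _
    have h₁ : Phi (x + 1) ≤ 1 := Phi_eq_cdf ▸ cdf_le_one _ _
    exact ⟨h₀.trans_lt (strictMono_Phi (by linarith)),
      (strictMono_Phi (by linarith : x < x + 1)).trans_le h₁⟩
  · exact mem_range_of_exists_le_of_exists_ge continuous_Phi
      (tendsto_Phi_atBot.eventually (eventually_le_nhds hy.1)).exists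
      (tendsto_Phi_atTop.eventually (eventually_ge_nhds hy.2)).exists

lemma PhiInv_Phi (x : ℝ) : PhiInv (Phi x) = x :=
  Function.leftInverse_invFun strictMono_Phi.injective x

lemma Phi_PhiInv {y : ℝ} (hy : y ∈ Ioo (0 : ℝ) 1) : Phi (PhiInv y) = y :=
  Function.invFun_eq (range_Phi ▸ hy : y ∈ range Phi)

lemma strictMonoOn_PhiInv : StrictMonoOn PhiInv (Ioo 0 1) := fun y hy z hz hyz => by
  rwa [← strictMono_Phi.lt_iff_lt, Phi_PhiInv hy, Phi_PhiInv hz]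

lemma preimage_Phi_Iio {y : ℝ} (hy : y ∈ Ioo (0 : ℝ) 1) : Phi ⁻¹' Iio y = Iio (PhiInv y) := by
  ext x
  conv_lhs => rw [← Phi_PhiInv hy]
  exact strictMono_Phi.lt_iff_lt

lemma integrableOn_image_Phi_iff {s : Set ℝ} (hs : MeasurableSet s) (G : ℝ → ℝ) :
    IntegrableOn G (Phi '' s) ↔ IntegrableOn (fun x => stdPdf x * G (Phi x)) s := by
  simpa [abs_of_pos (stdPdf_pos _)] using integrableOn_image_iff_integrableOn_abs_deriv_smul hs
    (fun x _ => (hasDerivAt_Phi x).hasDerivWithinAt) strictMono_Phi.injective.injOn G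

lemma setIntegral_image_Phi {s : Set ℝ} (hs : MeasurableSet s) (G : ℝ → ℝ) :
    ∫ y in Phi '' s, G y = ∫ x in s, stdPdf x * G (Phi x) := by
  simpa [abs_of_pos (stdPdf_pos _)] using integral_image_eq_integral_abs_deriv_smul hs
    (fun x _ => (hasDerivAt_Phi x).hasDerivWithinAt) strictMono_Phi.injective.injOn G

/-- `F ∘ Φ⁻¹` on `(0, 1)`, extended by the limits `l₀ = F (-∞)` and `l₁ = F (+∞)`. -/
def compPhiInv (F : ℝ → ℝ) (l₀ l₁ y : ℝ) : ℝ :=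
  if y ≤ 0 then l₀ else if 1 ≤ y then l₁ else F (PhiInv y)

section QuantileSubstitution

variable {G F : ℝ → ℝ} {l₀ l₁ : ℝ}

lemma intervalIntegrable_and_integral_zero_eq_compPhiInv_sub
    (hF : ∀ x, HasDerivAt F (stdPdf x * G (Phi x)) x)
    (hFi : Integrable fun x => stdPdf x * G (Phi x))
    (h₀ : Tendsto F atBot (𝓝 l₀)) (h₁ : Tendsto F atTop (𝓝 l₁)) {v : ℝ} (hv : v ∈ Icc 0 1) :
    IntervalIntegrable G volume 0 v ∧ ∫ y in 0..v, G y = compPhiInv F l₀ l₁ v - l₀ := by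
  rcases hv.1.eq_or_lt with rfl | hv₀
  · simp [compPhiInv]
  have hmeas : MeasurableSet (Phi ⁻¹' Iio v) := continuous_Phi.measurable measurableSet_Iio
  have himage : Ioo 0 v = Phi '' (Phi ⁻¹' Iio v) := by
    rw [image_preimage_eq_inter_range, range_Phi, Iio_inter_Ioo, min_eq_left hv.2]
  rw [intervalIntegrable_iff_integrableOn_Ioo_of_le hv₀.le, intervalIntegral.integral_of_le hv₀.le,
    integral_Ioc_eq_integral_Ioo, himage, integrableOn_image_Phi_iff hmeas,
    setIntegral_image_Phi hmeas]
  refine ⟨hFi.integrableOn, ?_⟩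
  rcases hv.2.eq_or_lt with rfl | hv₁
  · have huniv : Phi ⁻¹' Iio 1 = univ :=
      eq_univ_of_forall fun x => (range_Phi ▸ mem_range_self x : Phi x ∈ Ioo 0 1).2
    rw [huniv, setIntegral_univ, integral_of_hasDerivAt_of_tendsto hF hFi h₀ h₁]
    simp [compPhiInv]
  · rw [preimage_Phi_Iio ⟨hv₀, hv₁⟩, ← integral_Iic_eq_integral_Iio,
      integral_Iic_of_hasDerivAt_of_tendsto' (fun x _ => hF x) hFi.integrableOn h₀, compPhiInv,
      if_neg hv₀.not_ge, if_neg hv₁.not_ge]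

lemma intervalIntegrable_and_integral_eq_compPhiInv_sub
    (hF : ∀ x, HasDerivAt F (stdPdf x * G (Phi x)) x)
    (hFi : Integrable fun x => stdPdf x * G (Phi x))
    (h₀ : Tendsto F atBot (𝓝 l₀)) (h₁ : Tendsto F atTop (𝓝 l₁)) {u v : ℝ}
    (hu : u ∈ Icc 0 1) (hv : v ∈ Icc 0 1) :
    IntervalIntegrable G volume u v ∧
      ∫ y in u..v, G y = compPhiInv F l₀ l₁ v - compPhiInv F l₀ l₁ u := by
  obtain ⟨hui, hu⟩ := intervalIntegrable_and_integral_zero_eq_compPhiInv_sub hF hFi h₀ h₁ hu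
  obtain ⟨hvi, hv⟩ := intervalIntegrable_and_integral_zero_eq_compPhiInv_sub hF hFi h₀ h₁ hv
  refine ⟨hui.symm.trans hvi, ?_⟩
  rw [← intervalIntegral.integral_interval_sub_left hvi hui, hu, hv]
  ring

end QuantileSubstitution

lemma intervalIntegrable_and_integral_exp_mul_PhiInv (t : ℝ) {u v : ℝ}
    (hu : u ∈ Icc 0 1) (hv : v ∈ Icc 0 1) :
    IntervalIntegrable (fun y => exp (t * PhiInv y - t ^ 2 / 2)) volume u v ∧
      ∫ y in u..v, exp (t * PhiInv y - t ^ 2 / 2) = PhiShift t v - PhiShift t u := by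
  have hG : (fun x => stdPdf x * exp (t * PhiInv (Phi x) - t ^ 2 / 2)) = fun x => stdPdf (x - t) :=
    funext fun x => by rw [PhiInv_Phi, stdPdf_mul_exp]
  refine intervalIntegrable_and_integral_eq_compPhiInv_sub (F := fun x => Phi (x - t))
    ?_ ?_ ?_ ?_ hu hv
  · intro x
    rw [PhiInv_Phi, stdPdf_mul_exp]
    exact (hasDerivAt_Phi (x - t)).comp_sub_const x t
  · rw [hG]
    exact integrable_stdPdf.comp_sub_right t
  · exact tendsto_Phi_atBot.comp (tendsto_atBot_add_const_right _ (-t) tendsto_id)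
  · exact tendsto_Phi_atTop.comp (tendsto_atTop_add_const_right _ (-t) tendsto_id)

lemma intervalIntegrable_and_integral_PhiInv {u v : ℝ} (hu : u ∈ Icc 0 1) (hv : v ∈ Icc 0 1) :
    IntervalIntegrable PhiInv volume u v ∧
      ∫ y in u..v, PhiInv y = pdfAtQuantile u - pdfAtQuantile v := by
  have hG (x : ℝ) : -(x * stdPdf x) = stdPdf x * -PhiInv (Phi x) := by rw [PhiInv_Phi]; ring
  obtain ⟨hi, h⟩ := intervalIntegrable_and_integral_eq_compPhiInv_sub (G := fun y => -PhiInv y)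
    (F := stdPdf) (l₀ := 0) (l₁ := 0) (fun x => (hasDerivAt_stdPdf x).congr_deriv (hG x))
    (integrable_mul_stdPdf.neg.congr (.of_forall hG))
    (tendsto_stdPdf_cocompact.mono_left atBot_le_cocompact)
    (tendsto_stdPdf_cocompact.mono_left atTop_le_cocompact) hu hv
  refine ⟨by simpa [Pi.neg_def] using hi.neg, ?_⟩
  rw [intervalIntegral.integral_neg] at h
  change _ = pdfAtQuantile v - pdfAtQuantile u at h
  linarith

section Bathtub

variable {α : Type*} [MeasurableSpace α] {μ : Measure α} {J : Set α} {g v w ψ : α → ℝ}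

lemma MeasureTheory.Integrable.mul_of_mem_Icc (hv : Integrable v μ) (hgm : AEStronglyMeasurable g μ)
    (hg : ∀ᵐ y ∂μ, g y ∈ Icc 0 1) : Integrable (fun y => g y * v y) μ :=
  hv.bdd_mul hgm (c := 1) <| hg.mono fun y hy => abs_le.2 ⟨by linarith [hy.1], hy.2⟩

lemma integral_sub_indicator_one_mul (hJ : MeasurableSet J)
    (hgv : Integrable (fun y => g y * v y) μ) (hv : Integrable v μ) :
    ∫ y, (g y - J.indicator 1 y) * v y ∂μ = ∫ y, g y * v y ∂μ - ∫ y in J, v y ∂μ := by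
  have h (y : α) : (g y - J.indicator 1 y) * v y = g y * v y - J.indicator v y := by
    by_cases hy : y ∈ J <;> simp [hy, sub_mul]
  simp only [h]
  rw [integral_sub hgv (hv.indicator hJ), integral_indicator hJ]

lemma setIntegral_le_integral_mul_of_sign (hJ : MeasurableSet J) (hgm : AEStronglyMeasurable g μ)
    (hg : ∀ᵐ y ∂μ, g y ∈ Icc 0 1) (hv : Integrable v μ)
    (hvJ : ∀ᵐ y ∂μ, (y ∈ J → v y ≤ 0) ∧ (y ∉ J → 0 ≤ v y)) :
    ∫ y in J, v y ∂μ ≤ ∫ y, g y * v y ∂μ := by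
  have hnonneg : 0 ≤ ∫ y, (g y - J.indicator 1 y) * v y ∂μ := by
    refine integral_nonneg_of_ae ?_
    filter_upwards [hg, hvJ] with y hgy hvy
    by_cases hy : y ∈ J
    · simpa [hy] using mul_nonneg_of_nonpos_of_nonpos (sub_nonpos.2 hgy.2) (hvy.1 hy)
    · simpa [hy] using mul_nonneg hgy.1 (hvy.2 hy)
  rw [integral_sub_indicator_one_mul hJ (hv.mul_of_mem_Icc hgm hg) hv] at hnonneg
  linarith

lemma ae_eq_indicator_one_of_integral_mul_eq (hJ : MeasurableSet J)
    (hgm : AEStronglyMeasurable g μ) (hg : ∀ᵐ y ∂μ, g y ∈ Icc 0 1) (hv : Integrable v μ)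
    (hvJ : ∀ᵐ y ∂μ, (y ∈ J → v y < 0) ∧ (y ∉ J → 0 < v y))
    (heq : ∫ y, g y * v y ∂μ = ∫ y in J, v y ∂μ) :
    g =ᵐ[μ] J.indicator 1 := by
  have hnonneg : 0 ≤ᵐ[μ] fun y => (g y - J.indicator 1 y) * v y := by
    filter_upwards [hg, hvJ] with y hgy hvy
    by_cases hy : y ∈ J
    · simpa [hy] using mul_nonneg_of_nonpos_of_nonpos (sub_nonpos.2 hgy.2) (hvy.1 hy).le
    · simpa [hy] using mul_nonneg hgy.1 (hvy.2 hy).le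
  have hgv := hv.mul_of_mem_Icc hgm hg
  have hzero := (integral_eq_zero_iff_of_nonneg_ae hnonneg
    ((hgv.sub (hv.indicator hJ)).congr (.of_forall fun y => by
      by_cases hy : y ∈ J <;> simp [hy, sub_mul]))).1
    (by rw [integral_sub_indicator_one_mul hJ hgv hv, heq, sub_self])
  filter_upwards [hzero, hvJ] with y hy hvy
  have hv0 : v y ≠ 0 := by by_cases hyJ : y ∈ J <;> simp [hyJ] at hvy <;> linarith
  exact sub_eq_zero.1 ((mul_eq_zero.1 hy).resolve_right hv0)

lemma integral_mul_eq_setIntegral_of_ae_eq_indicator (hJ : MeasurableSet J)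
    (hgJ : g =ᵐ[μ] J.indicator 1) : ∫ y, g y * w y ∂μ = ∫ y in J, w y ∂μ := by
  rw [← integral_indicator hJ]
  exact integral_congr_ae (hgJ.mono fun y hy => by by_cases hyJ : y ∈ J <;> simp [hy, hyJ])

variable [IsFiniteMeasure μ]

lemma integral_mul_affine_eq (hgm : AEStronglyMeasurable g μ)
    (hg : ∀ᵐ y ∂μ, g y ∈ Icc 0 1) (hψ : Integrable ψ μ) (hmass : ∫ y, g y ∂μ = μ.real J)
    (hmom : ∫ y, ψ y * g y ∂μ = ∫ y in J, ψ y ∂μ) (a b : ℝ) :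
    ∫ y, g y * (a + b * ψ y) ∂μ = ∫ y in J, (a + b * ψ y) ∂μ := by
  have hgi : Integrable g μ := by simpa using (integrable_const (1 : ℝ)).mul_of_mem_Icc hgm hg
  have hψg : Integrable (fun y => ψ y * g y) μ := by
    simpa only [mul_comm] using hψ.mul_of_mem_Icc hgm hg
  have h (y : α) : g y * (a + b * ψ y) = a * g y + b * (ψ y * g y) := by ring
  simp only [h]
  rw [integral_add (hgi.const_mul a) (hψg.const_mul b), integral_const_mul, integral_const_mul,
    hmass, hmom, integral_add (integrable_const a).integrableOn (hψ.integrableOn.const_mul b),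
    setIntegral_const, integral_const_mul, smul_eq_mul]
  ring

lemma setIntegral_le_integral_mul_of_moments (hJ : MeasurableSet J)
    (hgm : AEStronglyMeasurable g μ) (hg : ∀ᵐ y ∂μ, g y ∈ Icc 0 1) (hψ : Integrable ψ μ)
    (hmass : ∫ y, g y ∂μ = μ.real J) (hmom : ∫ y, ψ y * g y ∂μ = ∫ y in J, ψ y ∂μ)
    (hw : Integrable w μ) {a b : ℝ}
    (hsep : ∀ᵐ y ∂μ, (y ∈ J → w y ≤ a + b * ψ y) ∧ (y ∉ J → a + b * ψ y ≤ w y)) :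
    ∫ y in J, w y ∂μ ≤ ∫ y, g y * w y ∂μ := by
  have hφ : Integrable (fun y => a + b * ψ y) μ := (integrable_const a).add (hψ.const_mul b)
  have h := setIntegral_le_integral_mul_of_sign hJ hgm hg (hw.sub hφ) <| hsep.mono fun y hy =>
    ⟨fun hyJ => sub_nonpos.2 (hy.1 hyJ), fun hyJ => sub_nonneg.2 (hy.2 hyJ)⟩
  simp only [Pi.sub_apply, mul_sub] at h
  rw [integral_sub (hw.mul_of_mem_Icc hgm hg) (hφ.mul_of_mem_Icc hgm hg),
    integral_sub hw.integrableOn hφ.integrableOn,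
    integral_mul_affine_eq hgm hg hψ hmass hmom] at h
  linarith

lemma ae_eq_indicator_one_of_moments (hJ : MeasurableSet J)
    (hgm : AEStronglyMeasurable g μ) (hg : ∀ᵐ y ∂μ, g y ∈ Icc 0 1) (hψ : Integrable ψ μ)
    (hmass : ∫ y, g y ∂μ = μ.real J) (hmom : ∫ y, ψ y * g y ∂μ = ∫ y in J, ψ y ∂μ) {a b : ℝ}
    (hsep : ∀ᵐ y ∂μ, (y ∈ J → a + b * ψ y < 0) ∧ (y ∉ J → 0 < a + b * ψ y)) :
    g =ᵐ[μ] J.indicator 1 :=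
  ae_eq_indicator_one_of_integral_mul_eq hJ hgm hg ((integrable_const a).add (hψ.const_mul b))
    hsep (integral_mul_affine_eq hgm hg hψ hmass hmom a b)

end Bathtub

lemma ConvexOn.exists_affine_ge_on_Icc_le_off_Ioo {f : ℝ → ℝ} (hf : ConvexOn ℝ univ f)
    {x₁ x₂ : ℝ} (h : x₁ < x₂) :
    ∃ a b : ℝ, (∀ x ∈ Icc x₁ x₂, f x ≤ a + b * x) ∧ ∀ x ∉ Ioo x₁ x₂, a + b * x ≤ f x := by
  set β := (f x₂ - f x₁) / (x₂ - x₁)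
  have hsec (x : ℝ) (hx : x ≠ x₁) :
      (x ≤ x₂ → (f x - f x₁) / (x - x₁) ≤ β) ∧ (x₂ ≤ x → β ≤ (f x - f x₁) / (x - x₁)) :=
    ⟨hf.secant_mono trivial trivial trivial hx h.ne',
      hf.secant_mono trivial trivial trivial h.ne' hx⟩
  refine ⟨f x₁ - β * x₁, β, fun x hx => ?_, fun x hx => ?_⟩
  · rcases hx.1.eq_or_lt with rfl | hlt
    · linarith
    · have h' := (hsec x hlt.ne').1 hx.2
      rw [div_le_iff₀ (sub_pos.2 hlt)] at h'
      linarith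
  · rcases lt_trichotomy x x₁ with hlt | rfl | hgt
    · have h' := (hsec x hlt.ne).1 (hlt.le.trans h.le)
      rw [div_le_iff_of_neg (sub_neg.2 hlt)] at h'
      linarith
    · linarith
    · have h' := (hsec x hgt.ne').2 (not_lt.1 fun h' => hx ⟨hgt, h'⟩)
      rw [le_div_iff₀ (sub_pos.2 hgt)] at h'
      linarith

lemma convexOn_exp_mul_sub (t c : ℝ) : ConvexOn ℝ univ fun x => exp (t * x - c) := by
  simpa [Function.comp_def, sub_eq_add_neg] using
    convexOn_exp.comp_affineMap (t • AffineMap.id ℝ ℝ + AffineMap.const ℝ ℝ (-c))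

lemma exists_affine_PhiInv_separates (t : ℝ) {a b : ℝ} (ha : 0 < a) (hab : a < b) (hb : b < 1) :
    ∃ α β : ℝ, ∀ y ∈ Ioo (0 : ℝ) 1,
      (y ∈ Ioo a b → exp (t * PhiInv y - t ^ 2 / 2) ≤ α + β * PhiInv y) ∧
      (y ∉ Ioo a b → α + β * PhiInv y ≤ exp (t * PhiInv y - t ^ 2 / 2)) := by
  have ha' : a ∈ Ioo (0 : ℝ) 1 := ⟨ha, hab.trans hb⟩
  have hb' : b ∈ Ioo (0 : ℝ) 1 := ⟨ha.trans hab, hb⟩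
  obtain ⟨α, β, hin, hout⟩ :=
    (convexOn_exp_mul_sub t (t ^ 2 / 2)).exists_affine_ge_on_Icc_le_off_Ioo
      (strictMonoOn_PhiInv ha' hb' hab)
  refine ⟨α, β, fun y hy => ⟨fun hyJ => hin _ ?_, fun hyJ => hout _ fun hx => hyJ ?_⟩⟩
  · exact ⟨strictMonoOn_PhiInv.monotoneOn ha' hy hyJ.1.le,
      strictMonoOn_PhiInv.monotoneOn hy hb' hyJ.2.le⟩
  · exact ⟨(strictMonoOn_PhiInv.lt_iff_lt ha' hy).1 hx.1,
      (strictMonoOn_PhiInv.lt_iff_lt hy hb').1 hx.2⟩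

lemma setIntegral_exp_mul_PhiInv_le_integral_mul {μ : Measure ℝ} [IsFiniteMeasure μ]
    [NullSingletonClass μ] (hμ : ∀ᵐ y ∂μ, y ∈ Ioo (0 : ℝ) 1) (t : ℝ) {a b : ℝ} (ha : 0 ≤ a)
    (hab : a < b) (hb : b ≤ 1) (hba : b - a < 1) {g : ℝ → ℝ} (hgm : AEStronglyMeasurable g μ)
    (hg : ∀ᵐ y ∂μ, g y ∈ Icc 0 1) (hψ : Integrable PhiInv μ)
    (hw : Integrable (fun y => exp (t * PhiInv y - t ^ 2 / 2)) μ)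
    (hmass : ∫ y, g y ∂μ = μ.real (Ioo a b))
    (hmom : ∫ y, PhiInv y * g y ∂μ = ∫ y in Ioo a b, PhiInv y ∂μ) :
    ∫ y in Ioo a b, exp (t * PhiInv y - t ^ 2 / 2) ∂μ ≤
      ∫ y, g y * exp (t * PhiInv y - t ^ 2 / 2) ∂μ := by
  rcases ha.eq_or_lt with rfl | ha₀
  · have hb' : b ∈ Ioo (0 : ℝ) 1 := ⟨hab, by linarith⟩
    refine (integral_mul_eq_setIntegral_of_ae_eq_indicator measurableSet_Ioo
      (ae_eq_indicator_one_of_moments measurableSet_Ioo hgm hg hψ hmass hmom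
        (a := -PhiInv b) (b := 1) ?_)).ge
    filter_upwards [hμ, Measure.ae_ne μ b] with y hy hyb
    refine ⟨fun hyJ => ?_, fun hyJ => ?_⟩
    · linarith [strictMonoOn_PhiInv hy hb' hyJ.2]
    · have hby : b < y := (not_lt.1 fun h => hyJ ⟨hy.1, h⟩).lt_of_ne' hyb
      linarith [strictMonoOn_PhiInv hb' hy hby]
  rcases hb.eq_or_lt with rfl | hb₁
  · have ha' : a ∈ Ioo (0 : ℝ) 1 := ⟨ha₀, hab⟩
    refine (integral_mul_eq_setIntegral_of_ae_eq_indicator measurableSet_Ioo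
      (ae_eq_indicator_one_of_moments measurableSet_Ioo hgm hg hψ hmass hmom
        (a := PhiInv a) (b := -1) ?_)).ge
    filter_upwards [hμ, Measure.ae_ne μ a] with y hy hya
    refine ⟨fun hyJ => ?_, fun hyJ => ?_⟩
    · linarith [strictMonoOn_PhiInv ha' hy hyJ.1]
    · have hya' : y < a := (not_lt.1 fun h => hyJ ⟨h, hy.2⟩).lt_of_ne hya
      linarith [strictMonoOn_PhiInv hy ha' hya']
  obtain ⟨α, β, hsep⟩ := exists_affine_PhiInv_separates t ha₀ hab hb₁
  exact setIntegral_le_integral_mul_of_moments measurableSet_Ioo hgm hg hψ hmass hmom hw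
    (hμ.mono hsep)

lemma intervalIntegral_exp_mul_PhiInv_le (t : ℝ) {a b : ℝ} (ha : 0 ≤ a) (hab : a < b)
    (hb : b ≤ 1) (hba : b - a < 1) {g : ℝ → ℝ} (hgm : Measurable g)
    (hg : ∀ y ∈ Icc (0 : ℝ) 1, g y ∈ Icc (0 : ℝ) 1) (hmass : ∫ y in (0 : ℝ)..1, g y = b - a)
    (hmom : ∫ y in (0 : ℝ)..1, PhiInv y * g y = pdfAtQuantile a - pdfAtQuantile b) :
    ∫ y in a..b, exp (t * PhiInv y - t ^ 2 / 2) ≤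
      ∫ y in (0 : ℝ)..1, g y * exp (t * PhiInv y - t ^ 2 / 2) := by
  set μ := volume.restrict (Ioo (0 : ℝ) 1)
  have hJ : Ioo a b ⊆ Ioo 0 1 := Ioo_subset_Ioo ha hb
  have h01 {f : ℝ → ℝ} : ∫ y in (0 : ℝ)..1, f y = ∫ y, f y ∂μ := by
    rw [intervalIntegral.integral_of_le zero_le_one, integral_Ioc_eq_integral_Ioo]
  have hab' {f : ℝ → ℝ} : ∫ y in a..b, f y = ∫ y in Ioo a b, f y ∂μ := by
    rw [Measure.restrict_restrict measurableSet_Ioo, inter_eq_self_of_subset_left hJ,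
      intervalIntegral.integral_of_le hab.le, integral_Ioc_eq_integral_Ioo]
  have hint {f : ℝ → ℝ} (hf : IntervalIntegrable f volume 0 1) : Integrable f μ :=
    (intervalIntegrable_iff_integrableOn_Ioo_of_le zero_le_one).1 hf
  have h0 : (0 : ℝ) ∈ Icc 0 1 := left_mem_Icc.2 zero_le_one
  have h1 : (1 : ℝ) ∈ Icc 0 1 := right_mem_Icc.2 zero_le_one
  have hμ : ∀ᵐ y ∂μ, y ∈ Ioo (0 : ℝ) 1 := ae_restrict_mem measurableSet_Ioo
  rw [hab', h01]
  refine setIntegral_exp_mul_PhiInv_le_integral_mul hμ t ha hab hb hba hgm.aestronglyMeasurable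
    (hμ.mono fun y hy => hg y (Ioo_subset_Icc_self hy))
    (hint (intervalIntegrable_and_integral_PhiInv h0 h1).1)
    (hint (intervalIntegrable_and_integral_exp_mul_PhiInv t h0 h1).1) ?_ ?_
  · rw [← h01, hmass, measureReal_restrict_apply measurableSet_Ioo,
      inter_eq_self_of_subset_left hJ, Real.volume_real_Ioo_of_le hab.le]
  · rw [← h01, ← hab', hmom,
      (intervalIntegrable_and_integral_PhiInv ⟨ha, hab.le.trans hb⟩ ⟨ha.trans hab.le, hb⟩).2]

lemma intervalIntegral_mul_eq_of_eqOn_indicator {a b : ℝ} (ha : 0 ≤ a) (hab : a ≤ b) (hb : b ≤ 1)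
    {g : ℝ → ℝ} (hg : ∀ y ∈ Icc (0 : ℝ) 1, g y = (Icc a b).indicator (fun _ => (1 : ℝ)) y)
    (w : ℝ → ℝ) :
    ∫ y in (0 : ℝ)..1, g y * w y = ∫ y in a..b, w y := by
  have hgJ : g =ᵐ[volume.restrict (Ioc 0 1)] (Ioc a b).indicator 1 := by
    filter_upwards [ae_restrict_mem measurableSet_Ioc,
      ae_restrict_of_ae (indicator_ae_eq_of_ae_eq_set (f := fun _ => (1 : ℝ))
        (Ioc_ae_eq_Icc (a := a) (b := b)))] with y hy hIoc
    rw [hg y (Ioc_subset_Icc_self hy)]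
    exact hIoc.symm
  rw [intervalIntegral.integral_of_le zero_le_one, intervalIntegral.integral_of_le hab,
    integral_mul_eq_setIntegral_of_ae_eq_indicator measurableSet_Ioc hgJ,
    Measure.restrict_restrict measurableSet_Ioc,
    inter_eq_self_of_subset_left (Ioc_subset_Ioc ha hb)]

theorem weighted_integral_min_two_constraints_general (σ R C D a : ℝ)
    (hC : C ∈ Set.Ioo (0 : ℝ) 1)
    (g : ℝ → ℝ) (hg : Measurable g) (hg01 : ∀ y ∈ Set.Icc (0 : ℝ) 1, g y ∈ Set.Icc (0 : ℝ) 1)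
    (hint : (∫ y in (0 : ℝ)..1, g y) = C)
    (hintD : (∫ y in (0 : ℝ)..1, PhiInv y * g y) = D)
    (hamem : a ∈ Set.Icc (0 : ℝ) (1 - C))
    (haD : pdfAtQuantile a - pdfAtQuantile (a + C) = D) :
    ((∫ y in (0 : ℝ)..1, g y * Real.exp ((R / σ) * PhiInv y - R ^ 2 / (2 * σ ^ 2))) ≥
      ∫ y in a..(a + C), Real.exp ((R / σ) * PhiInv y - R ^ 2 / (2 * σ ^ 2))) ∧
    ((∫ y in a..(a + C), Real.exp ((R / σ) * PhiInv y - R ^ 2 / (2 * σ ^ 2))) =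
      PhiShift (R / σ) (a + C) - PhiShift (R / σ) a) ∧
    ((∀ y ∈ Set.Icc (0 : ℝ) 1,
        g y = Set.indicator (Set.Icc a (a + C)) (fun _ => (1 : ℝ)) y) →
      (∫ y in (0 : ℝ)..1, g y * Real.exp ((R / σ) * PhiInv y - R ^ 2 / (2 * σ ^ 2))) =
        PhiShift (R / σ) (a + C) - PhiShift (R / σ) a) := by
  obtain ⟨hC₀, hC₁⟩ := hC
  obtain ⟨ha₀, ha₁⟩ := hamem
  have ht : R ^ 2 / (2 * σ ^ 2) = (R / σ) ^ 2 / 2 := by rw [div_pow, div_div, mul_comm]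
  have hJ := (intervalIntegrable_and_integral_exp_mul_PhiInv (R / σ) (u := a) (v := a + C)
    ⟨ha₀, by linarith⟩ ⟨by linarith, by linarith⟩).2
  simp only [ht]
  refine ⟨intervalIntegral_exp_mul_PhiInv_le (R / σ) ha₀ (by linarith) (by linarith)
    (by linarith) hg hg01 (by rw [hint]; ring) (by rw [hintD, haD]), hJ, fun hind => ?_⟩
  rw [intervalIntegral_mul_eq_of_eqOn_indicator ha₀ (by linarith) (by linarith) hind, hJ]

/-- two-constraint minimization: for measurable `g : [0,1] → [0,1]` with
`∫₀¹ g = C` and `∫₀¹ Φ⁻¹(y) g(y) dy = D`, and `a ∈ [0, 1-C]` with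
`Φ'(Φ⁻¹(a)) - Φ'(Φ⁻¹(a+C)) = D`, the weighted integral is minimized by the indicator of
`[a, a+C]`:
`∫₀¹ g(y) exp((R/σ)Φ⁻¹(y) - R²/(2σ²)) dy ≥ ∫ₐ^{a+C} exp((R/σ)Φ⁻¹(y) - R²/(2σ²)) dy
= Φ(Φ⁻¹(a+C) - R/σ) - Φ(Φ⁻¹(a) - R/σ)`. -/
theorem weighted_integral_min_two_constraints (σ R C D a : ℝ) (hσ : 0 < σ) (hR : 0 ≤ R)
    (hC : C ∈ Set.Ioo (0 : ℝ) 1)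
    (g : ℝ → ℝ) (hg : Measurable g) (hg01 : ∀ y ∈ Set.Icc (0 : ℝ) 1, g y ∈ Set.Icc (0 : ℝ) 1)
    (hint : (∫ y in (0 : ℝ)..1, g y) = C)
    (hintD : (∫ y in (0 : ℝ)..1, PhiInv y * g y) = D)
    (hamem : a ∈ Set.Icc (0 : ℝ) (1 - C))
    (haD : pdfAtQuantile a - pdfAtQuantile (a + C) = D) :
    ((∫ y in (0 : ℝ)..1, g y * Real.exp ((R / σ) * PhiInv y - R ^ 2 / (2 * σ ^ 2))) ≥
      ∫ y in a..(a + C), Real.exp ((R / σ) * PhiInv y - R ^ 2 / (2 * σ ^ 2))) ∧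
    ((∫ y in a..(a + C), Real.exp ((R / σ) * PhiInv y - R ^ 2 / (2 * σ ^ 2))) =
      PhiShift (R / σ) (a + C) - PhiShift (R / σ) a) ∧
    ((∀ y ∈ Set.Icc (0 : ℝ) 1,
        g y = Set.indicator (Set.Icc a (a + C)) (fun _ => (1 : ℝ)) y) →
      (∫ y in (0 : ℝ)..1, g y * Real.exp ((R / σ) * PhiInv y - R ^ 2 / (2 * σ ^ 2))) =
        PhiShift (R / σ) (a + C) - PhiShift (R / σ) a) :=
  weighted_integral_min_two_constraints_general σ R C D a hC g hg hg01 hint hintD hamem haD
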